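/- arXiv:2102.08520 — 5 statements merged into one kernel-verified Lean document; each statement's English description precedes it below -/
import Mathlib

section
/- For any integer partition $\eta$ of $n$ with parts $\eta_1,\dots,\eta_d$, the total weight $\dim(\eta)$ of paths from the empty partition to $\eta$ in the Kingman branching graph equals the multinomial coefficient $\binom{n}{\eta}=\frac{n!}{\eta_1!\cdots\eta_d!}$. -/
open Finset

/-- Kingman-graph edge weight `χ(ω,η)`: for a covering pair, the increased part size is
the unique element of `η - ω`, and the weight is the number of parts of `η` of that size. -/
def chiW (ω η : Multiset ℕ) : ℕ := η.count ((η - ω).sum)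

/-- The partitions covering `ω` (increase one part by `1`, or add a new part `1`). -/
def upSet (ω : Multiset ℕ) : Finset (Multiset ℕ) :=
  insert (1 ::ₘ ω) (ω.toFinset.image (fun k => (k + 1) ::ₘ ω.erase k))

/-- The partitions covered by `η` (decrease one part by `1`, deleting it if it was `1`). -/
def downSet (η : Multiset ℕ) : Finset (Multiset ℕ) :=
  η.toFinset.image (fun k => if k = 1 then η.erase 1 else (k - 1) ::ₘ η.erase k)

/-- Total path weight from `ω` up to `η` in the Kingman graph, with fuel. -/
def kdimAux : ℕ → Multiset ℕ → Multiset ℕ → ℕ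
  | 0, ω, η => if ω = η then 1 else 0
  | m + 1, ω, η => ∑ lam ∈ downSet η, chiW lam η * kdimAux m ω lam

/-- `dim(ω, η)`: total path weight from `ω` to `η`. -/
def kdim (ω η : Multiset ℕ) : ℕ := kdimAux (η.sum - ω.sum) ω η

/-- Multinomial coefficient `(|η| choose η)` as a rational. -/
def multQ (η : Multiset ℕ) : ℚ := (Nat.factorial η.sum : ℚ) / ((η.map Nat.factorial).prod : ℕ)

/-- Multinomial coefficient as a real. -/
noncomputable def multR (η : Multiset ℕ) : ℝ := (Nat.factorial η.sum : ℝ) / ((η.map Nat.factorial).prod : ℕ)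

/-- Young-diagram containment `ω ⊂ η` (componentwise on ranked parts, via conjugates). -/
def ydLE (ω η : Multiset ℕ) : Prop :=
  ∀ k, Multiset.card (ω.filter (fun a => k ≤ a)) ≤ Multiset.card (η.filter (fun a => k ≤ a))

/-- Rising factorial `a (a+1) ⋯ (a+k-1)`. -/
noncomputable def riseF (a : ℝ) (k : ℕ) : ℝ := ∏ i ∈ Finset.range k, (a + i)

/-- Ewens–Pitman moment `m(η) = 𝔼_{α,θ}[ ̃P_η]` (the `θ`-factor cancelled form of
`∏_{l=0}^{d-1}(θ+lα)/(θ)_{(n)} ∏ (1-α)_{(η_i-1)}`). -/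
noncomputable def EPM (α θ : ℝ) (η : Multiset ℕ) : ℝ :=
  (∏ l ∈ Finset.Ico 1 (Multiset.card η), (θ + l * α)) /
      (∏ i ∈ Finset.Ico 1 η.sum, (θ + i)) *
    (η.map (fun p => riseF (1 - α) (p - 1))).prod

/-- `a₁(η)! ⋯ a_n(η)!`. -/
def aprod (η : Multiset ℕ) : ℕ := ∏ k ∈ Finset.Icc 1 η.sum, Nat.factorial (η.count k)

/-- Chinese-restaurant edge weight `χ_B(ω,η)`. -/
def chiB (ω η : Multiset ℕ) : ℕ :=
  if (η - ω).sum = 1 then 1 else ω.count ((η - ω).sum - 1)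

/-- Augmented monomial symmetric function as a real-valued function. -/
noncomputable def tildePR (N : ℕ) (η : List ℕ) (x : Fin N → ℝ) : ℝ :=
  ∑ f ∈ (Finset.univ : Finset (Fin η.length → Fin N)).filter Function.Injective,
    ∏ j, x (f j) ^ η.get j

/-- Monomial symmetric function: sum over distinct rearrangements of `η`. -/
noncomputable def monoP (N : ℕ) (η : Multiset ℕ) (x : Fin N → ℝ) : ℝ :=
  ∑ v ∈ (Finset.univ : Finset (Fin N → Fin (η.sum + 1))).filter
      (fun v => Multiset.filter (fun a => 0 < a)
        (Multiset.map (fun i => ((v i : ℕ))) (Finset.univ : Finset (Fin N)).val) = η),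
    ∏ i, x i ^ ((v i : ℕ))

/-- `\vec P_η(x) = (n choose η) P_η(x)`. -/
noncomputable def vecP (N : ℕ) (η : Multiset ℕ) (x : Fin N → ℝ) : ℝ :=
  (Nat.factorial η.sum : ℝ) / ((η.map Nat.factorial).prod : ℕ) * monoP N η x

/-- Augmented monomial symmetric polynomial. -/
noncomputable def tildePoly (N : ℕ) (η : List ℕ) : MvPolynomial (Fin N) ℝ :=
  ∑ f ∈ (Finset.univ : Finset (Fin η.length → Fin N)).filter Function.Injective,
    ∏ j, (MvPolynomial.X (f j)) ^ η.get j

/-- The operator `𝓛_{α,θ}` on polynomials. -/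
noncomputable def Lop (α θ : ℝ) {N : ℕ} (p : MvPolynomial (Fin N) ℝ) :
    MvPolynomial (Fin N) ℝ :=
  MvPolynomial.C (1 / 2 : ℝ) *
      (∑ i, ∑ j, MvPolynomial.X i * ((if i = j then 1 else 0) - MvPolynomial.X j) *
        MvPolynomial.pderiv i (MvPolynomial.pderiv j p)) -
    MvPolynomial.C (1 / 2 : ℝ) *
      (∑ i, (MvPolynomial.C θ * MvPolynomial.X i + MvPolynomial.C α) * MvPolynomial.pderiv i p)

/-- The ideal generated by `∑ xᵢ - 1` (identities on the simplex). -/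
noncomputable def simplexIdeal (N : ℕ) : Ideal (MvPolynomial (Fin N) ℝ) :=
  Ideal.span {(∑ i, MvPolynomial.X i) - 1}

/-! Every path from `∅` to `η` ends with an edge from the partition obtained by lowering some
part `k` of `η` by one, and that edge has weight `a_k(η)`. Lowering a part `k` divides `∏ ηᵢ!` by
`k`, and `∑ₖ a_k(η) k = |η|`, so `dim(η) ∏ ηᵢ! = |η|!` follows by induction on `|η|`. -/

def lowerPart (η : Multiset ℕ) (k : ℕ) : Multiset ℕ :=
  if k = 1 then η.erase 1 else (k - 1) ::ₘ η.erase k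

section lowerPart

variable {η : Multiset ℕ} {k : ℕ}

lemma downSet_eq_image_lowerPart (η : Multiset ℕ) : downSet η = η.toFinset.image (lowerPart η) :=
  rfl

lemma lowerPart_cons_self (t : Multiset ℕ) (k : ℕ) :
    lowerPart (k ::ₘ t) k = if k = 1 then t else (k - 1) ::ₘ t := by
  unfold lowerPart
  split_ifs with h1 <;> simp [h1]

lemma sub_lowerPart (hk : k ∈ η) (hk0 : 0 < k) : η - lowerPart η k = {k} := by
  obtain ⟨t, rfl⟩ := Multiset.exists_cons_of_mem hk
  rw [lowerPart_cons_self, ← Multiset.singleton_add]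
  split_ifs with h1
  · exact add_tsub_cancel_right _ _
  · rw [← Multiset.singleton_add, add_tsub_add_eq_tsub_right, Multiset.sub_singleton, Multiset.erase_of_notMem]
    simpa using (by omega : k - 1 ≠ k)

lemma lowerPart_injOn (hpos : ∀ a ∈ η, 0 < a) : Set.InjOn (lowerPart η) η.toFinset := by
  intro k hk k' hk' h
  rw [Finset.mem_coe, Multiset.mem_toFinset] at hk hk'
  simpa [sub_lowerPart hk (hpos k hk), sub_lowerPart hk' (hpos k' hk')] using
    congrArg (η - ·) h

lemma chiW_lowerPart (hk : k ∈ η) (hk0 : 0 < k) : chiW (lowerPart η k) η = η.count k := by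
  rw [chiW, sub_lowerPart hk hk0, Multiset.sum_singleton]

lemma sum_lowerPart (hk : k ∈ η) (hk0 : 0 < k) : (lowerPart η k).sum = η.sum - 1 := by
  obtain ⟨t, rfl⟩ := Multiset.exists_cons_of_mem hk
  rw [lowerPart_cons_self]
  split_ifs with h1
  · simp [h1]
  · simp only [Multiset.sum_cons]
    omega

lemma pos_of_mem_lowerPart (hpos : ∀ a ∈ η, 0 < a) (hk : k ∈ η) :
    ∀ a ∈ lowerPart η k, 0 < a := by
  have := hpos k hk
  intro a ha
  unfold lowerPart at ha
  split_ifs at ha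
  · exact hpos a (Multiset.mem_of_mem_erase ha)
  · rcases Multiset.mem_cons.mp ha with rfl | ha
    · omega
    · exact hpos a (Multiset.mem_of_mem_erase ha)

lemma prod_factorial_eq_mul_prod_factorial_lowerPart (hk : k ∈ η) (hk0 : 0 < k) :
    (η.map Nat.factorial).prod = k * ((lowerPart η k).map Nat.factorial).prod := by
  obtain ⟨t, rfl⟩ := Multiset.exists_cons_of_mem hk
  rw [lowerPart_cons_self]
  split_ifs with h1
  · simp [h1]
  · simp [← mul_assoc, Nat.mul_factorial_pred hk0.ne']

end lowerPart

lemma kdim_zero_eq_sum_lowerPart {η : Multiset ℕ} (hpos : ∀ a ∈ η, 0 < a) {n : ℕ}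
    (hsum : η.sum = n + 1) :
    kdim 0 η = ∑ k ∈ η.toFinset, η.count k * kdim 0 (lowerPart η k) := by
  rw [kdim, Multiset.sum_zero, Nat.sub_zero, hsum, kdimAux, downSet_eq_image_lowerPart,
    Finset.sum_image (lowerPart_injOn hpos)]
  refine Finset.sum_congr rfl fun k hk => ?_
  rw [Multiset.mem_toFinset] at hk
  rw [chiW_lowerPart hk (hpos k hk), kdim, Multiset.sum_zero, Nat.sub_zero,
    sum_lowerPart hk (hpos k hk), hsum, Nat.add_sub_cancel]

lemma kdim_zero_mul_prod_factorial {η : Multiset ℕ} (hpos : ∀ a ∈ η, 0 < a) :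
    kdim 0 η * (η.map Nat.factorial).prod = η.sum.factorial := by
  induction hsum : η.sum generalizing η with
  | zero =>
    obtain rfl : η = 0 := Multiset.eq_zero_of_forall_notMem fun a ha =>
      (hpos a ha).ne' (Multiset.sum_eq_zero_iff.mp hsum a ha)
    simp [kdim, kdimAux]
  | succ n ih =>
    calc kdim 0 η * (η.map Nat.factorial).prod
        = ∑ k ∈ η.toFinset, η.count k * k *
            (kdim 0 (lowerPart η k) * ((lowerPart η k).map Nat.factorial).prod) := by
          rw [kdim_zero_eq_sum_lowerPart hpos hsum, Finset.sum_mul]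
          refine Finset.sum_congr rfl fun k hk => ?_
          rw [Multiset.mem_toFinset] at hk
          rw [prod_factorial_eq_mul_prod_factorial_lowerPart hk (hpos k hk)]
          ring
      _ = ∑ k ∈ η.toFinset, η.count k * k * n.factorial := by
          refine Finset.sum_congr rfl fun k hk => ?_
          rw [Multiset.mem_toFinset] at hk
          rw [ih (pos_of_mem_lowerPart hpos hk)
            (by rw [sum_lowerPart hk (hpos k hk), hsum, Nat.add_sub_cancel])]
      _ = (n + 1).factorial := by
          rw [← Finset.sum_mul, Nat.factorial_succ, ← hsum, Finset.sum_multiset_count η]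
          simp only [smul_eq_mul]

/-- `dim(η)`, the total path weight from `∅` to `η` in the Kingman branching graph,
equals the multinomial coefficient `(n choose η)`. -/
theorem kdim_empty_eq_multinomial (n : ℕ) (η : Multiset ℕ)
    (hpos : ∀ a ∈ η, 0 < a) (hsum : η.sum = n) :
    (kdim 0 η : ℚ) = (Nat.factorial n : ℚ) / ((η.map Nat.factorial).prod : ℕ) := by
  have hprod : ((η.map Nat.factorial).prod : ℚ) ≠ 0 := by
    simp [Multiset.prod_eq_zero_iff, Nat.factorial_ne_zero]
  rw [eq_div_iff hprod, ← hsum]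
  exact_mod_cast kdim_zero_mul_prod_factorial hpos
end

section
/- Let $\omega\subset\eta$ be integer partitions with $|\omega|=m$, $|\eta|=n$, $\eta$ of length $d$ and $\omega$ of length $k$. Then $\frac{\dim(\omega,\eta)}{\dim(\eta)} = \sum_{1\le i_1<\cdots<i_k\le d}\ \sum_{(v_{(1)},\dots,v_{(k)})=\omega} \frac{(\eta_{i_1})_{[v_1]}\cdots(\eta_{i_k})_{[v_k]}}{n_{[m]}}$, where $a_{[j]}=a(a-1)\cdots(a-j+1)$ denotes the falling factorial and the inner sum is over tuples $(v_1,\dots,v_k)$ whose decreasing rearrangement is $\omega$. -/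
open Finset

/-!
Multiplying out, the claim is `dim(ω,η) · ∏ ηᵢ! = (n - m)! · C(ω,η)`, where `C(ω,η)` is the sum
of `∏ (ηᵢ)_[gᵢ]` over all configurations `g` (draw `gᵢ` balls of colour `i`) whose nonzero
values rearrange to `ω`; for `ω = ∅` it reads `dim(η) = n! / ∏ ηᵢ!`. Induct on `n`. The weight
`χ(λ,η)` counts the indices `p` whose part `ηₚ` is lowered to give `λ`, so the Kingman recursion
is a sum over `p`, and `∏ ηᵢ! = ηₚ · ∏ (η - δₚ)ᵢ!`. The configuration sum satisfies the matching
recursion `∑ₚ ηₚ · C(ω, η - δₚ) = (n - m) · C(ω, η)`, termwise from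
`a · (a - 1)_[b] = (a - b) · a_[b]`.
Finally, configurations `g` are the pairs `(i₁ < ⋯ < i_k, v)` of the statement: `i` enumerates
the support of `g` and `v` lists its values.
-/

open scoped Nat

namespace Kingman

variable {d : ℕ}

lemma map_update_univ {ι β : Type*} [Fintype ι] [DecidableEq ι] [DecidableEq β] (e : ι → β)
    (p : ι) (x : β) :
    univ.val.map (Function.update e p x) = x ::ₘ (univ.val.map e).erase (e p) := by
  have hsplit (g : ι → β) : univ.val.map g = g p ::ₘ (univ.val.erase p).map g := by
    rw [← Multiset.map_cons, Multiset.cons_erase (mem_univ_val p)]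
  rw [hsplit, hsplit e, Multiset.erase_cons_head, Function.update_self]
  congr 1
  refine Multiset.map_congr rfl fun i hi => Function.update_of_ne ?_ _ _
  rintro rfl
  exact Multiset.Nodup.notMem_erase univ.nodup hi

lemma prod_apply_update {ι α M : Type*} [Fintype ι] [DecidableEq ι] [CommMonoid M]
    (F : ι → α → M) (e : ι → α) (p : ι) (x : α) :
    ∏ i, F i (Function.update e p x i) = F p x * ∏ i ∈ univ \ {p}, F i (e i) := by
  rw [← prod_update_of_mem (mem_univ p)]
  exact prod_congr rfl fun i _ => Function.apply_update F e p x i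

lemma mul_descFactorial_pred (a b : ℕ) :
    a * (a - 1).descFactorial b = (a - b) * a.descFactorial b := by
  cases a with
  | zero => simp
  | succ a => rw [Nat.add_sub_cancel, ← Nat.succ_descFactorial_succ, Nat.descFactorial_succ]

lemma eq_of_prod_descFactorial_ne_zero {e g : Fin d → ℕ} (hsum : ∑ i, e i ≤ ∑ i, g i)
    (h : ∏ i, (e i).descFactorial (g i) ≠ 0) : g = e := by
  have hle : ∀ i ∈ univ, g i ≤ e i := fun i _ =>
    not_lt.1 fun hlt => h (prod_eq_zero (mem_univ i) (Nat.descFactorial_of_lt hlt))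
  exact funext fun i =>
    (sum_eq_sum_iff_of_le hle).1 (le_antisymm (sum_le_sum hle) hsum) i (mem_univ i)

/-- A composition `e` encodes the partition `posParts e`. Zero entries are allowed, so that
lowering a part of size `1` needs no reindexing. -/
def posParts (e : Fin d → ℕ) : Multiset ℕ := (univ.val.map e).filter (0 < ·)

lemma pos_of_mem_posParts {e : Fin d → ℕ} {x : ℕ} (hx : x ∈ posParts e) : 0 < x :=
  (Multiset.mem_filter.1 hx).2

lemma count_posParts (e : Fin d → ℕ) {x : ℕ} (hx : 0 < x) :
    (posParts e).count x = #{p | e p = x} := by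
  rw [posParts, Multiset.count_filter_of_pos hx, Multiset.count_map, card_def, filter_val]
  simp only [eq_comm (a := x)]

lemma posParts_eq_map_support (g : Fin d → ℕ) :
    posParts g = ({i | 0 < g i} : Finset (Fin d)).val.map g := by
  rw [posParts, Multiset.filter_map, filter_val]
  rfl

@[to_additive]
lemma prod_map_posParts {M : Type*} [CommMonoid M] (f : ℕ → M) (hf : f 0 = 1)
    (e : Fin d → ℕ) : ((posParts e).map f).prod = ∏ i, f (e i) := by
  rw [posParts, Multiset.filter_map, Multiset.map_map, ← filter_val, ← prod_eq_multiset_prod]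
  refine prod_filter_of_ne fun i _ h => Nat.pos_of_ne_zero fun h0 => h ?_
  simp [h0, hf]

lemma sum_posParts (e : Fin d → ℕ) : (posParts e).sum = ∑ i, e i := by
  simpa using sum_map_posParts id rfl e

lemma posParts_getD {L : List ℕ} (hL : ∀ a ∈ L, 0 < a) :
    posParts (fun i : Fin L.length => L.getD i 0) = L := by
  have hmap : univ.val.map (fun i : Fin L.length => L.getD i 0) = L := by
    simp [List.ofFn_eq_map, Fin.univ_val_map]
  rw [posParts, hmap, Multiset.filter_eq_self]
  exact fun a ha => hL a ha

def lowerPart (M : Multiset ℕ) (k : ℕ) : Multiset ℕ :=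
  if k = 1 then M.erase 1 else (k - 1) ::ₘ M.erase k

lemma downSet_eq_image_lowerPart (M : Multiset ℕ) :
    downSet M = M.toFinset.image (lowerPart M) := rfl

lemma posParts_update {e : Fin d → ℕ} {p : Fin d} (hp : 0 < e p) :
    posParts (Function.update e p (e p - 1)) = lowerPart (posParts e) (e p) := by
  have hfilter : ((univ.val.map e).erase (e p)).filter (0 < ·)
      = ((univ.val.map e).filter (0 < ·)).erase (e p) := by
    rw [← Multiset.sub_singleton, ← Multiset.sub_singleton, Multiset.filter_sub,
      Multiset.filter_singleton, if_pos hp]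
  rw [posParts, posParts, lowerPart, map_update_univ]
  split_ifs with h1
  · rw [Multiset.filter_cons_of_neg _ (by omega), hfilter, h1]
  · rw [Multiset.filter_cons_of_pos _ (by omega), hfilter]

section LowerPart

variable {M : Multiset ℕ} {k : ℕ}

lemma sub_lowerPart (hk : k ∈ M) (hk0 : 0 < k) : M - lowerPart M k = {k} := by
  ext j
  have hcount := Multiset.one_le_count_iff_mem.2 hk
  rw [Multiset.count_sub, Multiset.count_singleton, lowerPart]
  split_ifs with h1 hj hj
  · subst h1 hj; rw [Multiset.count_erase_self]; omega
  · rw [Multiset.count_erase_of_ne (by omega)]; omega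
  · subst hj; rw [Multiset.count_cons, Multiset.count_erase_self, if_neg (by omega)]; omega
  · rw [Multiset.count_cons, Multiset.count_erase_of_ne hj]; split_ifs <;> omega

lemma chiW_lowerPart (hk : k ∈ M) (hk0 : 0 < k) : chiW (lowerPart M k) M = M.count k := by
  rw [chiW, sub_lowerPart hk hk0, Multiset.sum_singleton]

lemma sum_lowerPart (hk : k ∈ M) (hk0 : 0 < k) : (lowerPart M k).sum = M.sum - 1 := by
  have hM := congrArg Multiset.sum (Multiset.cons_erase hk)
  rw [Multiset.sum_cons] at hM
  unfold lowerPart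
  split_ifs with h1
  · subst h1; omega
  · rw [Multiset.sum_cons]; omega

lemma lowerPart_injOn (hM : ∀ x ∈ M, 0 < x) : Set.InjOn (lowerPart M) M.toFinset := by
  intro x hx y hy hxy
  simp only [Finset.mem_coe, Multiset.mem_toFinset] at hx hy
  have := congrArg (fun L => (M - L).sum) hxy
  simpa [sub_lowerPart hx (hM x hx), sub_lowerPart hy (hM y hy)] using this

end LowerPart

lemma kdim_of_sum_le {ω M : Multiset ℕ} (h : M.sum ≤ ω.sum) :
    kdim ω M = if ω = M then 1 else 0 := by
  rw [kdim, Nat.sub_eq_zero_of_le h, kdimAux]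

lemma kdim_eq_zero_of_sum_lt {ω M : Multiset ℕ} (h : M.sum < ω.sum) : kdim ω M = 0 := by
  rw [kdim_of_sum_le h.le, if_neg]
  rintro rfl
  exact lt_irrefl _ h

lemma kdim_eq_sum_downSet {ω M : Multiset ℕ} (hM : ∀ x ∈ M, 0 < x) (h : ω.sum < M.sum) :
    kdim ω M = ∑ l ∈ downSet M, chiW l M * kdim ω l := by
  obtain ⟨t, ht⟩ : ∃ t, M.sum - ω.sum = t + 1 := ⟨M.sum - ω.sum - 1, by omega⟩
  rw [kdim, ht, kdimAux, downSet_eq_image_lowerPart]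
  refine sum_congr rfl fun l hl => ?_
  obtain ⟨x, hx, rfl⟩ := mem_image.1 hl
  rw [Multiset.mem_toFinset] at hx
  rw [kdim, sum_lowerPart hx (hM x hx)]
  congr 2
  omega

lemma sum_downSet_posParts (e : Fin d → ℕ) (F : Multiset ℕ → ℕ) :
    ∑ l ∈ downSet (posParts e), chiW l (posParts e) * F l
      = ∑ p with 0 < e p, F (posParts (Function.update e p (e p - 1))) := by
  have hpos : ∀ x ∈ posParts e, 0 < x := fun x hx => pos_of_mem_posParts hx
  have hmaps : ∀ p ∈ ({p | 0 < e p} : Finset (Fin d)), e p ∈ (posParts e).toFinset := by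
    intro p hp
    rw [mem_filter] at hp
    simpa [posParts] using hp.2
  rw [downSet_eq_image_lowerPart, sum_image (lowerPart_injOn hpos),
    ← sum_fiberwise_of_maps_to hmaps]
  refine sum_congr rfl fun x hx => ?_
  rw [Multiset.mem_toFinset] at hx
  have hx0 := hpos x hx
  have hfiber : ∀ p ∈ ({p ∈ ({p | 0 < e p} : Finset (Fin d)) | e p = x}),
      F (posParts (Function.update e p (e p - 1))) = F (lowerPart (posParts e) x) := by
    intro p hp
    obtain ⟨-, rfl⟩ := mem_filter.1 hp
    rw [posParts_update hx0]
  rw [sum_congr rfl hfiber, sum_const, smul_eq_mul, chiW_lowerPart hx hx0, count_posParts e hx0,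
    filter_filter]
  congr 3
  ext p
  exact ⟨fun h => ⟨h ▸ hx0, h⟩, And.right⟩

/-- `C(ω, e)`; the bound `ω.sum + 1` on `g i` only makes the index set finite. -/
def configSum (ω : Multiset ℕ) (e : Fin d → ℕ) : ℕ :=
  ∑ g ∈ Fintype.piFinset (fun _ : Fin d => range (ω.sum + 1)) with posParts g = ω,
    ∏ i, (e i).descFactorial (g i)

lemma mul_prod_descFactorial_update (e g : Fin d → ℕ) (p : Fin d) :
    e p * ∏ i, (Function.update e p (e p - 1) i).descFactorial (g i)
      = (e p - g p) * ∏ i, (e i).descFactorial (g i) := by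
  rw [prod_apply_update (fun i a => a.descFactorial (g i)) e p,
    prod_eq_mul_prod_sdiff_singleton_of_mem (mem_univ p) (fun i => (e i).descFactorial (g i)),
    ← mul_assoc, ← mul_assoc, mul_descFactorial_pred]

lemma sum_mul_prod_descFactorial_update (e g : Fin d → ℕ) :
    ∑ p, e p * ∏ i, (Function.update e p (e p - 1) i).descFactorial (g i)
      = (∑ i, e i - ∑ i, g i) * ∏ i, (e i).descFactorial (g i) := by
  simp only [mul_prod_descFactorial_update, ← sum_mul]
  by_cases hle : ∀ i, g i ≤ e i
  · rw [sum_tsub_distrib _ fun i _ => hle i]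
  · obtain ⟨i, hi⟩ := not_forall.1 hle
    rw [prod_eq_zero (mem_univ i) (Nat.descFactorial_of_lt (not_le.1 hi)), mul_zero, mul_zero]

lemma sum_mul_configSum_update (ω : Multiset ℕ) (e : Fin d → ℕ) :
    ∑ p, e p * configSum ω (Function.update e p (e p - 1))
      = (∑ i, e i - ω.sum) * configSum ω e := by
  simp only [configSum, mul_sum]
  rw [sum_comm]
  refine sum_congr rfl fun g hg => ?_
  rw [sum_mul_prod_descFactorial_update, ← sum_posParts g, (mem_filter.1 hg).2]

lemma configSum_zero (e : Fin d → ℕ) : configSum 0 e = 1 := by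
  have hzero : ∀ g ∈ Fintype.piFinset (fun _ : Fin d => range 1), g = 0 := fun g hg =>
    funext fun i => by simpa using Fintype.mem_piFinset.1 hg i
  rw [configSum, sum_eq_single_of_mem 0 (by simp [posParts, Pi.zero_def])]
  · simp
  · intro g hg hne
    exact absurd (hzero g (by simpa using (mem_filter.1 hg).1)) hne

lemma configSum_of_sum_le {ω : Multiset ℕ} {e : Fin d → ℕ} (h : ∑ i, e i ≤ ω.sum) :
    configSum ω e = if posParts e = ω then ∏ i, (e i)! else 0 := by
  have hunique : ∀ g, posParts g = ω → ∏ i, (e i).descFactorial (g i) ≠ 0 → g = e :=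
    fun g hg => eq_of_prod_descFactorial_ne_zero (by rw [← sum_posParts g, hg]; exact h)
  rw [configSum]
  split_ifs with hω
  · have he :
        e ∈ {g ∈ Fintype.piFinset (fun _ : Fin d => range (ω.sum + 1)) | posParts g = ω} := by
      refine mem_filter.2 ⟨Fintype.mem_piFinset.2 fun i => mem_range.2 ?_, hω⟩
      exact Nat.lt_succ_of_le ((single_le_sum (fun j _ => Nat.zero_le (e j)) (mem_univ i)).trans h)
    rw [sum_eq_single_of_mem e he fun g hg hne =>
      not_not.1 fun h0 => hne (hunique g (mem_filter.1 hg).2 h0)]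
    simp only [Nat.descFactorial_self]
  · exact sum_eq_zero fun g hg => not_not.1 fun h0 =>
      hω (hunique g (mem_filter.1 hg).2 h0 ▸ (mem_filter.1 hg).2)

lemma prod_factorial_eq_mul_prod_factorial_update {e : Fin d → ℕ} {p : Fin d} (hp : 0 < e p) :
    ∏ i, (e i)! = e p * ∏ i, (Function.update e p (e p - 1) i)! := by
  rw [prod_apply_update (fun _ a => a !) e p,
    prod_eq_mul_prod_sdiff_singleton_of_mem (mem_univ p) (fun i => (e i)!), ← mul_assoc,
    Nat.mul_factorial_pred hp.ne']

lemma kdim_mul_prod_factorial_of_sum_le {ω : Multiset ℕ} {e : Fin d → ℕ}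
    (h : ∑ i, e i ≤ ω.sum) :
    kdim ω (posParts e) * ∏ i, (e i)! = (∑ i, e i - ω.sum)! * configSum ω e := by
  rw [kdim_of_sum_le (by rwa [sum_posParts]), configSum_of_sum_le h, Nat.sub_eq_zero_of_le h,
    Nat.factorial_zero, one_mul]
  simp only [eq_comm (a := ω)]
  split_ifs <;> simp

theorem kdim_mul_prod_factorial (ω : Multiset ℕ) (e : Fin d → ℕ) :
    kdim ω (posParts e) * ∏ i, (e i)! = (∑ i, e i - ω.sum)! * configSum ω e := by
  obtain ⟨n, hn⟩ : ∃ n, ∑ i, e i = n := ⟨_, rfl⟩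
  induction n generalizing e with
  | zero => exact kdim_mul_prod_factorial_of_sum_le (hn ▸ Nat.zero_le _)
  | succ n ih =>
    by_cases hle : ∑ i, e i ≤ ω.sum
    · exact kdim_mul_prod_factorial_of_sum_le hle
    have hlower : ∀ p, 0 < e p → ∑ i, Function.update e p (e p - 1) i = n := by
      intro p hp
      have := sum_eq_add_sum_sdiff_singleton_of_mem (mem_univ p) e
      rw [sum_update_of_mem (mem_univ p)]
      omega
    have hstep : ∀ p ∈ ({p | 0 < e p} : Finset (Fin d)),
        kdim ω (posParts (Function.update e p (e p - 1))) * ∏ i, (e i)!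
          = (n - ω.sum)! * (e p * configSum ω (Function.update e p (e p - 1))) := by
      intro p hp
      have hp := (mem_filter.1 hp).2
      rw [prod_factorial_eq_mul_prod_factorial_update hp, mul_left_comm, ih _ (hlower p hp),
        hlower p hp]
      ring
    calc kdim ω (posParts e) * ∏ i, (e i)!
        = ∑ p with 0 < e p,
            kdim ω (posParts (Function.update e p (e p - 1))) * ∏ i, (e i)! := by
          rw [kdim_eq_sum_downSet (fun x => pos_of_mem_posParts)
            (by rwa [sum_posParts, ← not_le]), sum_downSet_posParts e (kdim ω), sum_mul]
      _ = (n - ω.sum)! * ∑ p, e p * configSum ω (Function.update e p (e p - 1)) := by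
          rw [sum_congr rfl hstep, ← mul_sum, sum_filter_of_ne fun p _ h => ?_]
          exact Nat.pos_of_ne_zero (left_ne_zero_of_mul h)
      _ = (∑ i, e i - ω.sum)! * configSum ω e := by
          rw [sum_mul_configSum_update, ← mul_assoc, hn, Nat.succ_sub (by omega),
            Nat.factorial_succ, mul_comm (n - ω.sum + 1)]

section Extend

variable {k : ℕ} {s : Fin k → Fin d}

lemma map_image_val (hs : Function.Injective s) (g : Fin d → ℕ) :
    (univ.image s).val.map g = univ.val.map (g ∘ s) := by
  rw [image_val_of_injOn hs.injOn, Multiset.map_map]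

lemma support_extend (hs : Function.Injective s) {v : Fin k → ℕ} (hv : ∀ l, 0 < v l) :
    ({i | 0 < Function.extend s v 0 i} : Finset (Fin d)) = univ.image s := by
  ext i
  simp only [mem_filter, mem_univ, true_and, mem_image]
  constructor
  · intro hi
    by_contra hni
    rw [Function.extend_apply' _ _ _ hni] at hi
    exact lt_irrefl 0 hi
  · rintro ⟨l, -, rfl⟩
    rw [hs.extend_apply]
    exact hv l

lemma posParts_extend (hs : Function.Injective s) {v : Fin k → ℕ} (hv : ∀ l, 0 < v l) :
    posParts (Function.extend s v 0) = univ.val.map v := by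
  rw [posParts_eq_map_support, support_extend hs hv, map_image_val hs, Function.extend_comp hs]

lemma extend_mem_piFinset (hs : Function.Injective s) {m : ℕ} (v : Fin k → Fin (m + 1)) :
    Function.extend s (fun l => (v l : ℕ)) 0 ∈ Fintype.piFinset fun _ => range (m + 1) := by
  refine Fintype.mem_piFinset.2 fun i => mem_range.2 ?_
  by_cases hi : ∃ l, s l = i
  · obtain ⟨l, rfl⟩ := hi
    rw [hs.extend_apply]
    exact (v l).isLt
  · rw [Function.extend_apply' _ _ _ hi]
    exact Nat.succ_pos _

lemma prod_extend (hs : Function.Injective s) (F : Fin d → ℕ → ℕ) (hF : ∀ i, F i 0 = 1)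
    (v : Fin k → ℕ) : ∏ i, F i (Function.extend s v 0 i) = ∏ l, F (s l) (v l) := by
  rw [← prod_subset (subset_univ (univ.image s)), prod_image hs.injOn]
  · simp only [hs.extend_apply]
  · intro i _ hi
    rw [Function.extend_apply' _ _ _ fun ⟨l, hl⟩ => hi (mem_image.2 ⟨l, mem_univ l, hl⟩)]
    exact hF i

end Extend

section SupportEmb

variable {k : ℕ}

def supportEmb (g : Fin d → ℕ) (h : #{i | 0 < g i} = k) : Fin k ↪o Fin d :=
  ({i | 0 < g i} : Finset (Fin d)).orderEmbOfFin h

variable {g : Fin d → ℕ}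

lemma card_support_of_posParts_eq {ω : Multiset ℕ} (hg : posParts g = ω) (hk : ω.card = k) :
    #{i | 0 < g i} = k := by
  rw [← hk, ← hg, posParts_eq_map_support, Multiset.card_map]
  rfl

lemma map_comp_supportEmb (h : #{i | 0 < g i} = k) :
    univ.val.map (g ∘ supportEmb g h) = posParts g := by
  rw [posParts_eq_map_support, ← image_orderEmbOfFin_univ _ h, supportEmb,
    map_image_val (orderEmbOfFin _ h).injective]

lemma extend_supportEmb (h : #{i | 0 < g i} = k) :
    Function.extend (supportEmb g h) (g ∘ supportEmb g h) 0 = g := by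
  funext i
  by_cases hi : i ∈ Set.range (supportEmb g h)
  · obtain ⟨l, rfl⟩ := hi
    exact (supportEmb g h).injective.extend_apply _ _ l
  · rw [Function.extend_apply' _ _ _ hi, Pi.zero_apply]
    rw [supportEmb, range_orderEmbOfFin, coe_filter] at hi
    simp only [Set.mem_ofPred_eq, mem_univ, true_and, not_lt, Nat.le_zero] at hi
    exact hi.symm

lemma supportEmb_extend {s : Fin k → Fin d} (hs : StrictMono s) {v : Fin k → ℕ}
    (hv : ∀ l, 0 < v l) (h : #{i | 0 < Function.extend s v 0 i} = k) :
    ⇑(supportEmb (Function.extend s v 0) h) = s :=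
  (orderEmbOfFin_unique h
    (fun l => support_extend hs.injective hv ▸ mem_image_of_mem s (mem_univ l)) hs).symm

end SupportEmb

theorem sum_strictMono_sum_eq_configSum {k m : ℕ} {ω : Multiset ℕ} (hω : ∀ x ∈ ω, 0 < x)
    (hk : ω.card = k) (hm : ω.sum = m) (e : Fin d → ℕ) :
    ∑ s ∈ (univ : Finset (Fin k → Fin d)).filter
        (fun s => ∀ a b : Fin k, a < b → s a < s b),
      ∑ v ∈ (univ : Finset (Fin k → Fin (m + 1))).filter
          (fun v => Multiset.map (fun l => (v l : ℕ)) univ.val = ω),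
        ∏ l, (e (s l)).descFactorial (v l) = configSum ω e := by
  set configs := {g ∈ Fintype.piFinset (fun _ : Fin d => range (ω.sum + 1)) | posParts g = ω}
  have hvpos : ∀ v : Fin k → Fin (m + 1), Multiset.map (fun l => (v l : ℕ)) univ.val = ω →
      ∀ l, 0 < (v l : ℕ) := fun v hv l =>
    hω _ (hv ▸ Multiset.mem_map_of_mem _ (mem_univ_val l))
  have hcard : ∀ g ∈ configs, #{i | 0 < g i} = k := fun g hg =>
    card_support_of_posParts_eq (mem_filter.1 hg).2 hk
  have hbound : ∀ g ∈ configs, ∀ i, g i < m + 1 :=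
    fun g hg i => hm ▸ mem_range.1 (Fintype.mem_piFinset.1 (mem_filter.1 hg).1 i)
  rw [← sum_product', configSum]
  refine sum_bij' (fun p _ => Function.extend p.1 (fun l => (p.2 l : ℕ)) 0)
    (fun g hg => (supportEmb g (hcard g hg), fun l => ⟨g (supportEmb g (hcard g hg) l),
      hbound g hg _⟩)) ?_ ?_ ?_ ?_ ?_
  · rintro ⟨s, v⟩ hp
    simp only [mem_product, mem_filter, mem_univ, true_and] at hp
    have hs : Function.Injective s := StrictMono.injective fun a b h => hp.1 a b h
    exact mem_filter.2 ⟨hm ▸ extend_mem_piFinset hs v,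
      (posParts_extend hs (hvpos v hp.2)).trans hp.2⟩
  · intro g hg
    simp only [mem_product, mem_filter, mem_univ, true_and]
    exact ⟨fun a b h => (supportEmb g _).strictMono h,
      (map_comp_supportEmb _).trans (mem_filter.1 hg).2⟩
  · rintro ⟨s, v⟩ hp
    simp only [mem_product, mem_filter, mem_univ, true_and] at hp
    have hmono : StrictMono s := fun a b h => hp.1 a b h
    have hemb := supportEmb_extend hmono (hvpos v hp.2)
    refine Prod.ext (hemb _) (funext fun l => Fin.ext ?_)
    simp only [hemb, hmono.injective.extend_apply]
  · intro g hg
    exact extend_supportEmb _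
  · rintro ⟨s, v⟩ hp
    simp only [mem_product, mem_filter, mem_univ, true_and] at hp
    exact (prod_extend (StrictMono.injective fun a b h => hp.1 a b h)
      (fun i a => (e i).descFactorial a) (fun i => Nat.descFactorial_zero _) _).symm

lemma div_eq_div_descFactorial {K K₀ P N n m : ℕ} (hmn : m ≤ n) (hP : P ≠ 0)
    (hK : K * P = (n - m)! * N) (hK₀ : K₀ * P = n !) :
    (K : ℚ) / K₀ = N / n.descFactorial m := by
  have hfac := Nat.factorial_mul_descFactorial hmn
  have hK₀ne : (K₀ : ℚ) ≠ 0 := by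
    rintro h
    rw [Nat.cast_eq_zero.1 h, zero_mul] at hK₀
    exact Nat.factorial_ne_zero n hK₀.symm
  have hD : (n.descFactorial m : ℚ) ≠ 0 := by
    rintro h
    rw [Nat.cast_eq_zero.1 h, mul_zero] at hfac
    exact Nat.factorial_ne_zero n hfac.symm
  rw [div_eq_div_iff hK₀ne hD]
  apply mul_right_cancel₀ (Nat.cast_ne_zero.2 hP)
  have hK' : (K : ℚ) * P = (n - m)! * N := by exact_mod_cast hK
  have hK₀' : (K₀ : ℚ) * P = n ! := by exact_mod_cast hK₀
  have hfac' : ((n - m)! : ℚ) * n.descFactorial m = n ! := by exact_mod_cast hfac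
  linear_combination (n.descFactorial m : ℚ) * hK' + (N : ℚ) * hfac' - (N : ℚ) * hK₀'

end Kingman

open Kingman in
theorem dim_ratio_hypergeometric_general (m n k d : ℕ) (ω η : List ℕ)
    (hposω : ∀ a ∈ ω, 0 < a) (hposη : ∀ a ∈ η, 0 < a)
    (hm : ω.sum = m) (hn : η.sum = n) (hk : ω.length = k) (hd : η.length = d) :
    (kdim (ω : Multiset ℕ) (η : Multiset ℕ) : ℚ) / (kdim 0 (η : Multiset ℕ) : ℚ) =
      (∑ s ∈ (Finset.univ : Finset (Fin k → Fin d)).filter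
          (fun s => ∀ a b : Fin k, a < b → s a < s b),
        ∑ v ∈ (Finset.univ : Finset (Fin k → Fin (m + 1))).filter
            (fun v => Multiset.map (fun l => ((v l : ℕ)))
              (Finset.univ : Finset (Fin k)).val = (ω : Multiset ℕ)),
          ∏ l, ((η.getD (s l : ℕ) 0).descFactorial (v l : ℕ) : ℚ)) /
        (n.descFactorial m : ℚ) := by
  subst hd
  set e : Fin η.length → ℕ := fun i => η.getD i 0
  have hη : posParts e = η := posParts_getD hposη
  have hsum : ∑ i, e i = n := by rw [← sum_posParts, hη, Multiset.sum_coe, hn]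
  by_cases hmn : m ≤ n
  · have hkdim := kdim_mul_prod_factorial (ω : Multiset ℕ) e
    have hkdim₀ := kdim_mul_prod_factorial 0 e
    rw [hη, hsum, Multiset.sum_coe, hm, ← sum_strictMono_sum_eq_configSum hposω
      (by rw [Multiset.coe_card, hk]) (by rw [Multiset.sum_coe, hm])] at hkdim
    rw [hη, hsum, configSum_zero, Multiset.sum_zero, Nat.sub_zero, mul_one] at hkdim₀
    have hP : ∏ i, (e i)! ≠ 0 := prod_ne_zero_iff.2 fun i _ => Nat.factorial_ne_zero _
    have := div_eq_div_descFactorial hmn hP hkdim hkdim₀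
    push_cast at this
    exact this
  · rw [kdim_eq_zero_of_sum_lt (by simp only [Multiset.sum_coe]; omega),
      Nat.descFactorial_of_lt (by omega)]
    simp

/-- `dim(ω,η)/dim(η)` equals the hypergeometric-type sum
`∑_{i₁<⋯<i_k} ∑_{(v) ranked = ω} ∏ (η_{i_l})_{[v_l]} / n_{[m]}`. -/
theorem dim_ratio_hypergeometric (m n k d : ℕ) (ω η : List ℕ)
    (hposω : ∀ a ∈ ω, 0 < a) (hposη : ∀ a ∈ η, 0 < a)
    (hsortω : ω.Pairwise (· ≥ ·)) (hsortη : η.Pairwise (· ≥ ·))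
    (hm : ω.sum = m) (hn : η.sum = n) (hk : ω.length = k) (hd : η.length = d)
    (hsub : ydLE (ω : Multiset ℕ) (η : Multiset ℕ)) :
    (kdim (ω : Multiset ℕ) (η : Multiset ℕ) : ℚ) / (kdim 0 (η : Multiset ℕ) : ℚ) =
      (∑ s ∈ (Finset.univ : Finset (Fin k → Fin d)).filter
          (fun s => ∀ a b : Fin k, a < b → s a < s b),
        ∑ v ∈ (Finset.univ : Finset (Fin k → Fin (m + 1))).filter
            (fun v => Multiset.map (fun l => ((v l : ℕ)))
              (Finset.univ : Finset (Fin k)).val = (ω : Multiset ℕ)),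
          ∏ l, ((η.getD (s l : ℕ) 0).descFactorial (v l : ℕ) : ℚ)) /
        (n.descFactorial m : ℚ) :=
  dim_ratio_hypergeometric_general m n k d ω η hposω hposη hm hn hk hd
end

section
/- For any integer partitions $\omega\subset\eta$ with $|\omega|=m<n=|\eta|$, the hypergeometric probabilities sum to one over an intermediate level: $\sum_{\lambda:\ |\lambda|=m}\mathcal H(\lambda\mid\eta) = 1$, where $\mathcal H(\lambda\mid\eta)=\binom{m}{\lambda}\dim(\lambda,\eta)/\binom{n}{\eta}$. -/
open Finset

/-!
Both `η ↦ ∑_{λ ⊢ m} (m choose λ) dim(λ, η)` and `η ↦ (n choose η)` satisfy the recursion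
`f η = ∑_{μ ↗ η} χ(μ, η) f μ`: the first because `dim` is a path sum, the second because it is the
multinomial recursion `(n choose η) = ∑ᵢ (n-1 choose η - eᵢ)` with the parts grouped by size.
They agree on partitions of `m`, so induction on `n - m` shows they are equal.
-/

open scoped Nat

def decrPart (η : Multiset ℕ) (k : ℕ) : Multiset ℕ :=
  if k = 1 then η.erase 1 else (k - 1) ::ₘ η.erase k

lemma downSet_eq_image_decrPart (η : Multiset ℕ) : downSet η = η.toFinset.image (decrPart η) :=
  rfl

section decrPart

variable {η : Multiset ℕ} {k : ℕ}

lemma sub_decrPart (hk : k ∈ η) (hk0 : 0 < k) : η - decrPart η k = {k} := by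
  obtain ⟨t, rfl⟩ : ∃ t, η = k ::ₘ t := ⟨η.erase k, (Multiset.cons_erase hk).symm⟩
  unfold decrPart
  split_ifs with hk1
  · subst hk1
    rw [Multiset.erase_cons_head, ← Multiset.singleton_add, add_tsub_cancel_right]
  · rw [Multiset.erase_cons_head, ← Multiset.singleton_add, ← Multiset.singleton_add,
      tsub_add_eq_tsub_tsub_swap, add_tsub_cancel_right, Multiset.sub_singleton,
      Multiset.erase_of_notMem (by simp only [Multiset.mem_singleton]; omega)]

lemma chiW_decrPart (hk : k ∈ η) (hk0 : 0 < k) : chiW (decrPart η k) η = η.count k := by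
  rw [chiW, sub_decrPart hk hk0, Multiset.sum_singleton]

lemma sum_decrPart (hk : k ∈ η) (hk0 : 0 < k) : (decrPart η k).sum = η.sum - 1 := by
  have hη : η.sum = k + (η.erase k).sum := by
    rw [← Multiset.sum_cons, Multiset.cons_erase hk]
  unfold decrPart
  split_ifs with hk1
  · subst hk1; omega
  · rw [Multiset.sum_cons]; omega

lemma pos_of_mem_decrPart (hpos : ∀ a ∈ η, 0 < a) (hk : k ∈ η) :
    ∀ a ∈ decrPart η k, 0 < a := by
  intro a ha
  unfold decrPart at ha
  split_ifs at ha with hk1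
  · exact hpos a (Multiset.mem_of_mem_erase ha)
  · rcases Multiset.mem_cons.mp ha with rfl | ha
    · have := hpos k hk; omega
    · exact hpos a (Multiset.mem_of_mem_erase ha)

lemma prod_factorial_decrPart (hk : k ∈ η) (hk0 : 0 < k) :
    ((decrPart η k).map Nat.factorial).prod * k = (η.map Nat.factorial).prod := by
  have hη : (η.map Nat.factorial).prod = k ! * ((η.erase k).map Nat.factorial).prod := by
    rw [← Multiset.prod_cons, ← Multiset.map_cons, Multiset.cons_erase hk]
  unfold decrPart
  split_ifs with hk1
  · subst hk1
    simp [hη]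
  · rw [Multiset.map_cons, Multiset.prod_cons, hη, ← Nat.mul_factorial_pred hk0.ne']
    ring

lemma multQ_decrPart (hk : k ∈ η) (hk0 : 0 < k) :
    multQ (decrPart η k) = k * ((η.sum - 1)! / ((η.map Nat.factorial).prod : ℕ)) := by
  have hprod : ((decrPart η k).map Nat.factorial).prod ≠ 0 :=
    Multiset.prod_ne_zero (by simp [Nat.factorial_ne_zero])
  rw [multQ, sum_decrPart hk hk0, ← prod_factorial_decrPart hk hk0]
  push_cast
  field_simp

end decrPart

lemma decrPart_injOn {η : Multiset ℕ} (hpos : ∀ a ∈ η, 0 < a) :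
    Set.InjOn (decrPart η) η.toFinset := by
  intro k hk k' hk' h
  rw [Finset.mem_coe, Multiset.mem_toFinset] at hk hk'
  have h' := sub_decrPart hk' (hpos k' hk')
  rw [← h, sub_decrPart hk (hpos k hk)] at h'
  exact Multiset.singleton_inj.mp h'

lemma multQ_pos (η : Multiset ℕ) : 0 < multQ η := by
  have hprod : 0 < (η.map Nat.factorial).prod :=
    Multiset.prod_pos (by simp [Nat.factorial_pos])
  unfold multQ
  positivity

/-- Each of the `count k` parts of size `k` contributes `k (n-1)! / ∏ ηᵢ!`. -/
theorem sum_downSet_chiW_mul_multQ {η : Multiset ℕ} (hpos : ∀ a ∈ η, 0 < a) (hη : η.sum ≠ 0) :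
    ∑ μ ∈ downSet η, (chiW μ η : ℚ) * multQ μ = multQ η := by
  have hterm : ∀ k ∈ η.toFinset, (chiW (decrPart η k) η : ℚ) * multQ (decrPart η k)
      = ((η.count k • k : ℕ) : ℚ) * ((η.sum - 1)! / ((η.map Nat.factorial).prod : ℕ)) := by
    intro k hk
    rw [Multiset.mem_toFinset] at hk
    rw [chiW_decrPart hk (hpos k hk), multQ_decrPart hk (hpos k hk), smul_eq_mul, Nat.cast_mul]
    ring
  rw [downSet_eq_image_decrPart, Finset.sum_image (decrPart_injOn hpos), Finset.sum_congr rfl hterm,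
    ← Finset.sum_mul, ← Nat.cast_sum, ← Finset.sum_multiset_count, multQ,
    ← Nat.mul_factorial_pred hη]
  push_cast
  ring

theorem sum_partition_multQ_mul_kdimAux (m k : ℕ) (η : Multiset ℕ) (hpos : ∀ a ∈ η, 0 < a)
    (hsum : η.sum = m + k) :
    ∑ lam : Nat.Partition m, multQ lam.parts * (kdimAux k lam.parts η : ℚ) = multQ η := by
  induction k generalizing η with
  | zero =>
    rw [Fintype.sum_eq_single ⟨η, fun hi => hpos _ hi, hsum⟩]
    · simp [kdimAux]
    · intro lam hlam
      have : lam.parts ≠ η := fun h => hlam (Nat.Partition.ext h)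
      simp [kdimAux, this]
  | succ k ih =>
    have hdown : ∀ μ ∈ downSet η,
        ∑ lam : Nat.Partition m, multQ lam.parts * (kdimAux k lam.parts μ : ℚ) = multQ μ := by
      intro μ hμ
      rw [downSet_eq_image_decrPart] at hμ
      obtain ⟨j, hj, rfl⟩ := Finset.mem_image.mp hμ
      rw [Multiset.mem_toFinset] at hj
      exact ih _ (pos_of_mem_decrPart hpos hj) (by rw [sum_decrPart hj (hpos j hj)]; omega)
    calc ∑ lam : Nat.Partition m, multQ lam.parts * (kdimAux (k + 1) lam.parts η : ℚ)
        = ∑ μ ∈ downSet η, (chiW μ η : ℚ) *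
            ∑ lam : Nat.Partition m, multQ lam.parts * (kdimAux k lam.parts μ : ℚ) := by
          simp only [kdimAux, Nat.cast_sum, Nat.cast_mul, Finset.mul_sum]
          rw [Finset.sum_comm]
          exact Finset.sum_congr rfl fun _ _ => Finset.sum_congr rfl fun _ _ => by ring
      _ = ∑ μ ∈ downSet η, (chiW μ η : ℚ) * multQ μ :=
          Finset.sum_congr rfl fun μ hμ => by rw [hdown μ hμ]
      _ = multQ η := sum_downSet_chiW_mul_multQ hpos (by omega)

/-- The hypergeometric probabilities `𝓗(λ|η) = (m choose λ) dim(λ,η) / (n choose η)`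
sum to one over the partitions `λ` of `m`. -/
theorem hypergeometric_sum_one (m n : ℕ) (hmn : m < n) (η : Multiset ℕ)
    (hpos : ∀ a ∈ η, 0 < a) (hsum : η.sum = n) :
    ∑ lam : Nat.Partition m, multQ lam.parts * (kdim lam.parts η : ℚ) / multQ η = 1 := by
  have hkdim : ∀ lam : Nat.Partition m, kdim lam.parts η = kdimAux (n - m) lam.parts η := by
    intro lam
    rw [kdim, lam.parts_sum, hsum]
  simp only [hkdim, ← Finset.sum_div]
  rw [sum_partition_multQ_mul_kdimAux m (n - m) η hpos (by omega)]
  exact div_self (multQ_pos η).ne'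
end

section
/- Let $0\le\alpha<1$, $\theta>-\alpha$, and let $M_n(\eta)=\binom{n}{\eta}\frac{1}{a_1(\eta)!\cdots a_n(\eta)!}\frac{\prod_{l=0}^{d-1}(\theta+l\alpha)}{(\theta)_{(n)}}\prod_{i=1}^d (1-\alpha)_{(\eta_i-1)}$ be the Ewens–Pitman sampling formula for a partition $\eta$ of $n$ of length $d$. Then $\{M_n\}$ is consistent: for every partition $\eta$ of $n$, $M_{n-1}(\eta) = \sum_{\lambda}\frac{\binom{n-1}{\eta}\,\chi(\eta,\lambda)}{\binom{n}{\lambda}}\,M_n(\lambda)$, the sum being over partitions $\lambda$ of $n$ covering $\eta$, with $\chi(\eta,\lambda)=a_{\lambda_i}(\lambda)$ where $\lambda_i$ is the increased part. -/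
open Finset

/-- The Ewens–Pitman sampling formula
`M_n(η) = (n choose η) (1/∏ a_k(η)!) ⋅ m(η)`. -/
noncomputable def EPSF (α θ : ℝ) (η : Multiset ℕ) : ℝ :=
  multR η / (aprod η : ℝ) * EPM α θ η

/-! The covers of `η` are `1 ::ₘ η` (a new table in the Chinese restaurant) and
`(k + 1) ::ₘ η.erase k` (a table of size `k` grows).  Relative to `EPSF η`, their summands are
`(θ + dα)/(θ + m)` and `a_k(η) (k - α)/(θ + m)`, where `d` is the length and `m` the size of `η`:
the multinomial coefficients cancel, and `χ` exactly compensates the change in `∏ a_j!`.  Since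
`∑ₖ a_k(η) k = m`, these relative weights add up to `1`. -/

open scoped Nat

lemma prod_factorial_count_cons {α : Type*} [DecidableEq α] {s : Finset α} (η : Multiset α)
    {a : α} (ha : a ∈ s) :
    ∏ j ∈ s, ((a ::ₘ η).count j)! = (a ::ₘ η).count a * ∏ j ∈ s, (η.count j)! := by
  rw [← mul_prod_erase s _ ha, ← mul_prod_erase s _ ha, Multiset.count_cons_self,
    Nat.factorial_succ, mul_assoc]
  congr 2
  exact prod_congr rfl fun j hj => by rw [Multiset.count_cons_of_ne (ne_of_mem_erase hj)]

lemma aprod_eq_prod_factorial_count {η : Multiset ℕ} (hpos : ∀ a ∈ η, 0 < a) {s : Finset ℕ}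
    (hs : ∀ a ∈ η, a ∈ s) : aprod η = ∏ j ∈ s, (η.count j)! := by
  have hsupp : ∀ t : Finset ℕ, η.toFinset ⊆ t →
      ∏ j ∈ t, (η.count j)! = ∏ j ∈ η.toFinset, (η.count j)! := fun t ht =>
    (prod_subset ht fun j _ hj => by
      rw [Multiset.count_eq_zero.mpr (by simpa using hj), Nat.factorial_zero]).symm
  have hIcc : η.toFinset ⊆ Icc 1 η.sum := fun a ha => by
    rw [Multiset.mem_toFinset] at ha
    exact mem_Icc.mpr ⟨hpos a ha, Multiset.le_sum_of_mem ha⟩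
  rw [aprod, hsupp _ hIcc, hsupp _ fun a ha => hs a (Multiset.mem_toFinset.mp ha)]

lemma aprod_cons {η : Multiset ℕ} (hpos : ∀ a ∈ η, 0 < a) {a : ℕ} (ha : 0 < a) :
    aprod (a ::ₘ η) = (a ::ₘ η).count a * aprod η := by
  have hs : ∀ b ∈ a ::ₘ η, b ∈ range ((a ::ₘ η).sum + 1) := fun b hb =>
    mem_range_succ_iff.mpr (Multiset.le_sum_of_mem hb)
  rw [aprod_eq_prod_factorial_count (Multiset.forall_mem_cons.mpr ⟨ha, hpos⟩) hs,
    aprod_eq_prod_factorial_count hpos fun b hb => hs b (Multiset.mem_cons_of_mem hb),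
    prod_factorial_count_cons η (hs a (Multiset.mem_cons_self a η))]

lemma count_div_aprod_cons {η : Multiset ℕ} (hpos : ∀ a ∈ η, 0 < a) {a : ℕ} (ha : 0 < a) :
    ((a ::ₘ η).count a : ℝ) / aprod (a ::ₘ η) = (aprod η : ℝ)⁻¹ := by
  have hcount : ((a ::ₘ η).count a : ℝ) ≠ 0 := by
    exact_mod_cast (Multiset.count_pos.mpr (Multiset.mem_cons_self a η)).ne'
  rw [aprod_cons hpos ha, Nat.cast_mul, div_mul_cancel_left₀ hcount]

lemma chiW_cons (a : ℕ) (μ : Multiset ℕ) : chiW μ (a ::ₘ μ) = (a ::ₘ μ).count a := by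
  rw [chiW, ← Multiset.singleton_add, add_tsub_cancel_right, Multiset.sum_singleton]

lemma chiW_cons_cons {a b : ℕ} (hab : a ≠ b) (μ : Multiset ℕ) :
    chiW (b ::ₘ μ) (a ::ₘ μ) = (a ::ₘ μ).count a := by
  rw [chiW, ← Multiset.singleton_add, ← Multiset.singleton_add, add_tsub_add_eq_tsub_right,
    Multiset.sub_singleton, Multiset.erase_of_notMem (by simpa using hab.symm),
    Multiset.sum_singleton]

lemma one_le_sum_of_pos {η : Multiset ℕ} (hpos : ∀ a ∈ η, 0 < a) (hη : η ≠ 0) : 1 ≤ η.sum := by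
  obtain ⟨a, ha⟩ := Multiset.exists_mem_of_ne_zero hη
  exact (hpos a ha).trans_le (Multiset.le_sum_of_mem ha)

lemma riseF_zero (a : ℝ) : riseF a 0 = 1 := prod_range_zero _

lemma riseF_succ (a : ℝ) (k : ℕ) : riseF a (k + 1) = riseF a k * (a + k) := prod_range_succ _ _

lemma EPM_cons_one (α θ : ℝ) {η : Multiset ℕ} (hpos : ∀ a ∈ η, 0 < a) (hη : η ≠ 0) :
    EPM α θ (1 ::ₘ η) = EPM α θ η * ((θ + Multiset.card η * α) / (θ + η.sum)) := by
  rw [EPM, EPM, Multiset.card_cons, Multiset.sum_cons, add_comm 1,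
    prod_Ico_succ_top (Multiset.card_pos.mpr hη), prod_Ico_succ_top (one_le_sum_of_pos hpos hη),
    Multiset.map_cons, Multiset.prod_cons, Nat.sub_self, riseF_zero, mul_div_mul_comm]
  ring

lemma EPM_cons_succ (α θ : ℝ) (μ : Multiset ℕ) {k : ℕ} (hk : 0 < k) :
    EPM α θ ((k + 1) ::ₘ μ) = EPM α θ (k ::ₘ μ) * ((k - α) / (θ + (k ::ₘ μ).sum)) := by
  obtain ⟨j, rfl⟩ : ∃ j, k = j + 1 := ⟨k - 1, by omega⟩
  rw [EPM, EPM, Multiset.card_cons, Multiset.card_cons, Multiset.sum_cons, Multiset.sum_cons,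
    add_right_comm (j + 1) 1, prod_Ico_succ_top (show 1 ≤ j + 1 + μ.sum by omega),
    Multiset.map_cons, Multiset.map_cons, Multiset.prod_cons, Multiset.prod_cons,
    Nat.add_sub_cancel, Nat.add_sub_cancel, riseF_succ, div_mul_eq_div_div, Nat.cast_succ j]
  ring

lemma multR_ne_zero (η : Multiset ℕ) : multR η ≠ 0 := by
  have : (η.map Nat.factorial).prod ≠ 0 :=
    Multiset.prod_ne_zero fun h => by
      obtain ⟨b, -, hb⟩ := Multiset.mem_map.mp h
      exact Nat.factorial_ne_zero b hb
  unfold multR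
  positivity

lemma multR_mul_div_multR_mul_EPSF (α θ : ℝ) (η lam : Multiset ℕ) (c : ℝ) :
    multR η * c / multR lam * EPSF α θ lam = multR η * (c / aprod lam * EPM α θ lam) := by
  have := multR_ne_zero lam
  rw [EPSF]
  field_simp

lemma upSet_summand_cons_one (α θ : ℝ) {η : Multiset ℕ} (hpos : ∀ a ∈ η, 0 < a) (hη : η ≠ 0) :
    multR η * (chiW η (1 ::ₘ η) : ℝ) / multR (1 ::ₘ η) * EPSF α θ (1 ::ₘ η) =
      EPSF α θ η * ((θ + Multiset.card η * α) / (θ + η.sum)) := by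
  rw [multR_mul_div_multR_mul_EPSF, chiW_cons, count_div_aprod_cons hpos one_pos,
    EPM_cons_one α θ hpos hη, EPSF]
  ring

lemma upSet_summand_succ_cons_erase (α θ : ℝ) {η : Multiset ℕ} (hpos : ∀ a ∈ η, 0 < a) {k : ℕ}
    (hk : k ∈ η) :
    multR η * (chiW η ((k + 1) ::ₘ η.erase k) : ℝ) / multR ((k + 1) ::ₘ η.erase k) *
        EPSF α θ ((k + 1) ::ₘ η.erase k) =
      EPSF α θ η * (η.count k * (k - α) / (θ + η.sum)) := by
  obtain ⟨μ, rfl⟩ : ∃ μ, η = k ::ₘ μ := ⟨η.erase k, (Multiset.cons_erase hk).symm⟩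
  have hμ : ∀ a ∈ μ, 0 < a := fun a ha => hpos a (Multiset.mem_cons_of_mem ha)
  have hk0 : 0 < k := hpos k (Multiset.mem_cons_self k μ)
  rw [Multiset.erase_cons_head, multR_mul_div_multR_mul_EPSF, chiW_cons_cons k.succ_ne_self,
    count_div_aprod_cons hμ k.succ_pos, EPM_cons_succ α θ μ hk0, EPSF,
    ← count_div_aprod_cons hμ hk0]
  ring

lemma sum_upSet {M : Type*} [AddCommMonoid M] (η : Multiset ℕ) (f : Multiset ℕ → M) :
    ∑ lam ∈ upSet η, f lam = f (1 ::ₘ η) + ∑ k ∈ η.toFinset, f ((k + 1) ::ₘ η.erase k) := by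
  have hinj : Set.InjOn (fun k => (k + 1) ::ₘ η.erase k) η.toFinset := by
    intro x hx y hy h
    by_contra hxy
    have hcount := congrArg (Multiset.count x) h
    have hx1 : 1 ≤ η.count x := Multiset.one_le_count_iff_mem.mpr (Multiset.mem_toFinset.mp hx)
    simp only [Multiset.count_cons, Multiset.count_erase_self,
      Multiset.count_erase_of_ne hxy] at hcount
    split_ifs at hcount <;> omega
  have hnew : 1 ::ₘ η ∉ η.toFinset.image fun k => (k + 1) ::ₘ η.erase k := by
    simp only [mem_image, Multiset.mem_toFinset, not_exists, not_and]
    intro k hk h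
    have hcard := congrArg Multiset.card h
    rw [Multiset.card_cons, Multiset.card_cons, Multiset.card_erase_add_one hk] at hcard
    omega
  rw [upSet, sum_insert hnew, sum_image hinj]

lemma sum_count_mul_sub (η : Multiset ℕ) (α : ℝ) :
    ∑ k ∈ η.toFinset, (η.count k : ℝ) * (k - α) = η.sum - Multiset.card η * α := by
  simp_rw [← nsmul_eq_mul]
  rw [← sum_multiset_map_count η fun k => (k : ℝ) - α, Multiset.sum_map_sub,
    Nat.cast_multiset_sum, Multiset.map_const', Multiset.sum_replicate]

theorem EPSF_consistency_general (α θ : ℝ) (hα1 : α < 1) (hθ : -α < θ)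
    (η : Multiset ℕ) (hpos : ∀ a ∈ η, 0 < a) :
    EPSF α θ η =
      ∑ lam ∈ upSet η, multR η * (chiW η lam : ℝ) / multR lam * EPSF α θ lam := by
  rcases eq_or_ne η 0 with rfl | hη
  · simp [upSet, EPSF, multR, aprod, EPM, chiW, riseF]
  have hθη : θ + η.sum ≠ 0 := by
    have : (1 : ℝ) ≤ η.sum := by exact_mod_cast one_le_sum_of_pos hpos hη
    linarith
  rw [sum_upSet, upSet_summand_cons_one α θ hpos hη,
    sum_congr rfl fun k hk => upSet_summand_succ_cons_erase α θ hpos (Multiset.mem_toFinset.mp hk),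
    ← mul_sum, ← sum_div, sum_count_mul_sub, ← mul_add, ← add_div]
  field_simp
  ring

/-- Consistency of the Ewens–Pitman sampling formula:
`M_{n-1}(η) = ∑_{λ covers η} ((n-1 choose η) χ(η,λ) / (n choose λ)) M_n(λ)`. -/
theorem EPSF_consistency (α θ : ℝ) (hα0 : 0 ≤ α) (hα1 : α < 1) (hθ : -α < θ)
    (n : ℕ) (hn : 1 ≤ n) (η : Multiset ℕ) (hpos : ∀ a ∈ η, 0 < a)
    (hsum : η.sum = n - 1) :
    EPSF α θ η =
      ∑ lam ∈ upSet η, multR η * (chiW η lam : ℝ) / multR lam * EPSF α θ lam :=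
  EPSF_consistency_general α θ hα1 hθ η hpos
end

section
/- Let $0\le\alpha<1$, $\theta>-\alpha$, and let $\mathcal L_{\alpha,\theta} = \frac12\sum_{i,j=1}^N x_i(\delta_{ij}-x_j)\partial^2_{x_ix_j} - \frac12\sum_{i=1}^N(\theta x_i+\alpha)\partial_{x_i}$ act on polynomials in $x_1,\dots,x_N$. For an integer partition $\eta$ of $n$ with length $d$ and all parts $\eta_i\ge 2$, on the set $\{\sum_i x_i = 1\}$ one has $\mathcal L_{\alpha,\theta}\tilde P_\eta = -\frac12 n(n+\theta-1)\tilde P_\eta + \frac12\sum_{i=1}^d \eta_i(\eta_i-1-\alpha)\tilde P_{\eta-e_i}$. -/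
open Finset

/-! Writing `E = ∑ᵢ xᵢ ∂ᵢ` for the Euler operator, `∑ᵢⱼ xᵢ xⱼ ∂ᵢ ∂ⱼ = E² - E`, so
`𝓛 = ½ ∑ᵢ (xᵢ ∂ᵢ² - α ∂ᵢ) - ½ (E² - E + θ E)`, and `E` acts on the homogeneous polynomial
`P̃_η` of degree `n` as multiplication by `n`. The remaining lowering operator sends `x^s` to
`∑ᵢ sᵢ (sᵢ - 1 - α) x^(s - eᵢ)`. On a monomial `∏ⱼ x_{f j} ^ ηⱼ` of `P̃_η` (with `f` injective)
only the terms `i = f j` survive, and each is the monomial of `P̃_{η - e_j}` indexed by the same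
`f`. -/

open MvPolynomial

section Homogeneous

variable {R σ : Type*} [CommSemiring R] [Fintype σ]

theorem MvPolynomial.IsHomogeneous.sum_X_mul_X_mul_pderiv_pderiv {φ : MvPolynomial σ R} {n : ℕ}
    (h : φ.IsHomogeneous n) :
    ∑ i, ∑ j, X i * X j * pderiv i (pderiv j φ) = (n * (n - 1)) • φ := by
  calc ∑ i, ∑ j, X i * X j * pderiv i (pderiv j φ)
      = ∑ j, X j * ∑ i, X i * pderiv i (pderiv j φ) := by
        rw [Finset.sum_comm]
        simp only [Finset.mul_sum]
        exact Finset.sum_congr rfl fun _ _ => Finset.sum_congr rfl fun _ _ => by ring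
    _ = (n - 1) • ∑ j, X j * pderiv j φ := by
        rw [Finset.smul_sum]
        refine Finset.sum_congr rfl fun j _ => ?_
        rw [h.pderiv.sum_X_mul_pderiv, mul_smul_comm]
    _ = (n * (n - 1)) • φ := by rw [h.sum_X_mul_pderiv, smul_smul, mul_comm]

end Homogeneous

section Lowering

variable {R σ : Type*} [CommRing R] [Fintype σ]

noncomputable def loweringOp (α : R) (φ : MvPolynomial σ R) : MvPolynomial σ R :=
  ∑ i, (X i * pderiv i (pderiv i φ) - C α * pderiv i φ)

theorem loweringOp_sum (α : R) {ι : Type*} (t : Finset ι) (φ : ι → MvPolynomial σ R) :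
    loweringOp α (∑ x ∈ t, φ x) = ∑ x ∈ t, loweringOp α (φ x) := by
  simp only [loweringOp, map_sum, Finset.mul_sum, ← Finset.sum_sub_distrib]
  exact Finset.sum_comm

theorem loweringOp_monomial (α : R) (s : σ →₀ ℕ) :
    loweringOp α (monomial s (1 : R)) =
      ∑ i, monomial (s - Finsupp.single i 1) ((s i : R) * (s i - 1 - α)) := by
  refine Finset.sum_congr rfl fun i _ => ?_
  rw [pderiv_monomial, X_mul_pderiv_monomial, C_mul_monomial, nsmul_eq_mul, ← C_eq_coe_nat,
    C_mul_monomial, ← map_sub, Finsupp.tsub_apply, Finsupp.single_eq_same]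
  congr 1
  rcases Nat.eq_zero_or_pos (s i) with hi | hi
  · simp [hi]
  · push_cast [Nat.cast_sub hi]
    ring

end Lowering

theorem Lop_eq_of_isHomogeneous (α θ : ℝ) {N n : ℕ} {φ : MvPolynomial (Fin N) ℝ}
    (h : φ.IsHomogeneous n) :
    Lop α θ φ = C (-((n : ℝ) * ((n : ℝ) + θ - 1) / 2)) * φ +
      C (1 / 2 : ℝ) * loweringOp α φ := by
  have second_order : ∑ i, ∑ j, X i * ((if i = j then 1 else 0) - X j) *
      pderiv i (pderiv j φ) = ∑ i, X i * pderiv i (pderiv i φ) - C ((n : ℝ) * (n - 1)) * φ := by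
    have hn : ((n * (n - 1) : ℕ) : ℝ) = n * (n - 1) := by
      rcases n with _ | n <;> simp
    simp only [mul_sub, sub_mul, Finset.sum_sub_distrib, mul_ite, mul_one, mul_zero, ite_mul,
      zero_mul, Finset.sum_ite_eq, Finset.mem_univ, if_true,
      h.sum_X_mul_X_mul_pderiv_pderiv, nsmul_eq_mul, ← hn, map_natCast]
  have first_order : ∑ i, (C θ * X i + C α) * pderiv i φ =
      C (θ * n) * φ + ∑ i, C α * pderiv i φ := by
    simp only [add_mul, Finset.sum_add_distrib, mul_assoc, ← Finset.mul_sum,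
      h.sum_X_mul_pderiv, nsmul_eq_mul, map_mul, map_natCast]
  have hconst : (C (-((n : ℝ) * ((n : ℝ) + θ - 1) / 2)) : MvPolynomial (Fin N) ℝ) =
      -(C (1 / 2 : ℝ) * (C ((n : ℝ) * (n - 1)) + C (θ * n))) := by
    simp only [← map_mul, ← map_add, ← map_neg]
    congr 1
    ring
  rw [Lop, loweringOp, second_order, first_order, hconst, Finset.sum_sub_distrib]
  ring

section TildePoly

variable {N : ℕ}

noncomputable def tildeExponent (l : List ℕ) (f : Fin l.length → Fin N) : Fin N →₀ ℕ :=
  ∑ j, Finsupp.single (f j) (l.get j)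

theorem tildePoly_eq_sum_monomial (N : ℕ) (l : List ℕ) :
    tildePoly N l = ∑ f ∈ (univ : Finset (Fin l.length → Fin N)).filter Function.Injective,
      monomial (tildeExponent l f) (1 : ℝ) :=
  Finset.sum_congr rfl fun f _ => by
    rw [tildeExponent, monomial_sum_one]
    exact Finset.prod_congr rfl fun j _ => by rw [X_pow_eq_monomial]

theorem tildeExponent_apply_self {l : List ℕ} {f : Fin l.length → Fin N}
    (hf : Function.Injective f) (k : Fin l.length) : tildeExponent l f (f k) = l.get k := by
  rw [tildeExponent, Finsupp.finsetSum_apply, Finset.sum_eq_single_of_mem k (mem_univ k)]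
  · exact Finsupp.single_eq_same
  · exact fun j _ hj => Finsupp.single_eq_of_ne (hf.ne hj.symm)

theorem tildeExponent_apply_of_notMem_range {l : List ℕ} {f : Fin l.length → Fin N}
    {i : Fin N} (hi : i ∉ Set.range f) : tildeExponent l f i = 0 := by
  rw [tildeExponent, Finsupp.finsetSum_apply]
  exact Finset.sum_eq_zero fun j _ => Finsupp.single_eq_of_ne fun h => hi ⟨j, h.symm⟩

theorem isHomogeneous_tildePoly (N : ℕ) (l : List ℕ) : (tildePoly N l).IsHomogeneous l.sum :=
  IsHomogeneous.sum _ _ _ fun f _ => by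
    simpa [Fin.sum_univ_getElem] using
      IsHomogeneous.prod univ _ (fun j => l.get j) fun j _ => isHomogeneous_X_pow (f j) (l.get j)

theorem tildeExponent_set_pred {l : List ℕ} {f : Fin l.length → Fin N}
    (hf : Function.Injective f) (k : Fin l.length) :
    tildeExponent (l.set k (l.get k - 1)) (f ∘ Fin.cast (List.length_set (i := k))) =
      tildeExponent l f - Finsupp.single (f k) 1 := by
  have hf' : Function.Injective (f ∘ Fin.cast (List.length_set (i := k) (a := l.get k - 1))) :=
    hf.comp (Fin.cast_injective _)
  ext i
  rw [Finsupp.tsub_apply]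
  by_cases hi : i ∈ Set.range f
  · obtain ⟨j, rfl⟩ := hi
    rw [tildeExponent_apply_self hf, Finsupp.single_apply]
    have := tildeExponent_apply_self hf' (Fin.cast List.length_set.symm j)
    simp only [Function.comp_apply, Fin.cast_cast, Fin.cast_eq_self] at this
    rw [this]
    by_cases hkj : k = j
    · subst hkj; simp
    · simp [Fin.val_ne_of_ne hkj, hf.ne hkj]
  · have hi' : i ∉ Set.range (f ∘ Fin.cast (List.length_set (i := k) (a := l.get k - 1))) :=
      fun ⟨_, hj⟩ => hi ⟨_, hj⟩
    rw [tildeExponent_apply_of_notMem_range hi, tildeExponent_apply_of_notMem_range hi', zero_tsub]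

theorem tildePoly_set_pred (N : ℕ) (l : List ℕ) (k : Fin l.length) :
    tildePoly N (l.set k (l.get k - 1)) =
      ∑ f ∈ (univ : Finset (Fin l.length → Fin N)).filter Function.Injective,
        monomial (tildeExponent l f - Finsupp.single (f k) 1) (1 : ℝ) := by
  have hlen : (l.set k (l.get k - 1)).length = l.length := List.length_set
  rw [tildePoly_eq_sum_monomial]
  refine Finset.sum_nbij' (fun g => g ∘ Fin.cast hlen.symm) (fun f => f ∘ Fin.cast hlen)
    (fun g hg => ?_) (fun f hf => ?_) (fun _ _ => rfl) (fun _ _ => rfl) (fun g hg => ?_)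
  · simp only [mem_filter, mem_univ, true_and] at hg ⊢
    exact hg.comp (Fin.cast_injective _)
  · simp only [mem_filter, mem_univ, true_and] at hf ⊢
    exact hf.comp (Fin.cast_injective _)
  · simp only [mem_filter, mem_univ, true_and] at hg
    rw [← tildeExponent_set_pred (hg.comp (Fin.cast_injective hlen.symm))]
    rfl

theorem loweringOp_tildePoly (α : ℝ) (N : ℕ) (l : List ℕ) :
    loweringOp α (tildePoly N l) = ∑ k : Fin l.length,
      C ((l.get k : ℝ) * (l.get k - 1 - α)) * tildePoly N (l.set k (l.get k - 1)) := by
  simp_rw [tildePoly_set_pred, Finset.mul_sum, C_mul_monomial, mul_one]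
  rw [tildePoly_eq_sum_monomial, loweringOp_sum, Finset.sum_comm]
  refine Finset.sum_congr rfl fun f hf => ?_
  rw [mem_filter] at hf
  rw [loweringOp_monomial]
  refine (Fintype.sum_of_injective f hf.2 _ _ (fun i hi => ?_) fun k => ?_).symm
  · simp [tildeExponent_apply_of_notMem_range hi]
  · rw [tildeExponent_apply_self hf.2]

end TildePoly

open MvPolynomial in
theorem generator_on_tildeP_no_singletons_general (α θ : ℝ) (n d N : ℕ) (η : List ℕ)
    (hsum : η.sum = n) (hlen : η.length = d) :
    Ideal.Quotient.mk (simplexIdeal N) (Lop α θ (tildePoly N η)) =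
      Ideal.Quotient.mk (simplexIdeal N)
        (C (-((n : ℝ) * ((n : ℝ) + θ - 1) / 2)) * tildePoly N η +
          C (1 / 2 : ℝ) *
            ∑ i ∈ Finset.range d,
              C ((η.getD i 0 : ℝ) * ((η.getD i 0 : ℝ) - 1 - α)) *
                tildePoly N (η.set i (η.getD i 0 - 1))) := by
  subst hsum hlen
  refine congrArg _ ?_
  rw [Lop_eq_of_isHomogeneous α θ (isHomogeneous_tildePoly N η), loweringOp_tildePoly,
    ← Fin.sum_univ_eq_sum_range]
  simp only [List.getD_eq_getElem, Fin.is_lt, List.get_eq_getElem]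

open MvPolynomial in
/-- Action of `𝓛_{α,θ}` on `̃P_η` when all parts of `η` are at least `2`,
as an identity modulo the ideal generated by `∑ xᵢ - 1`. -/
theorem generator_on_tildeP_no_singletons (α θ : ℝ) (hα0 : 0 ≤ α) (hα1 : α < 1)
    (hθ : -α < θ) (n d N : ℕ) (η : List ℕ) (hpos : ∀ a ∈ η, 2 ≤ a)
    (hsum : η.sum = n) (hlen : η.length = d) (hN : n ≤ N) :
    Ideal.Quotient.mk (simplexIdeal N) (Lop α θ (tildePoly N η)) =
      Ideal.Quotient.mk (simplexIdeal N)
        (C (-((n : ℝ) * ((n : ℝ) + θ - 1) / 2)) * tildePoly N η +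
          C (1 / 2 : ℝ) *
            ∑ i ∈ Finset.range d,
              C ((η.getD i 0 : ℝ) * ((η.getD i 0 : ℝ) - 1 - α)) *
                tildePoly N (η.set i (η.getD i 0 - 1))) :=
  generator_on_tildeP_no_singletons_general α θ n d N η hsum hlen
end
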